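/- Let γ ∈ GR(4, 4^ℓ) be a primitive pq-th root of unity. For every i with 0 ≤ i < 4 and every k with 1 ≤ k < p, one has D_i(γ^{kq}) = 3(q-1)/4 in GR(4, 4^ℓ), i.e., D_i(γ^{kq}) equals the image of the integer 3(q-1)/4 under the canonical map Z → GR(4, 4^ℓ). -/

import Mathlib

/-!
Put `β = γ ^ (k * q)`, an element of order `p`, so that `β ^ u` only depends on `u mod p`.
Every element of `GR(4, 4 ^ ℓ)` is a unit or squares to zero, and `4 = 0`; hence `β - 1` is a
unit and `∑_{a < p} β ^ a = 0`, i.e. `β` summed over the nonzero residues mod `p` gives `-1`.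
The parametrisation `(s, j) ↦ g ^ (4 s + i) h ^ j` of `D_i` is injective because
`lcm (p - 1) (q - 1) = e`, and modulo `p` it becomes `g ^ (4 s + j + i)`, where `4 s + j` runs
once through `[0, e)`, that is `(q - 1) / 4` times through a period of `g`. So
`D_i(β) = -(q - 1) / 4 = 3 (q - 1) / 4`.
-/

open Finset

namespace TruncatedWittVector

variable {p : ℕ} [Fact p.Prime] {k : Type*}

theorem mul_self_eq_zero_of_coeff_zero [CommRing k] [CharP k p]
    {x : TruncatedWittVector p 2 k} (hx : x.coeff 0 = 0) : x * x = 0 := by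
  obtain ⟨y, rfl⟩ := WittVector.truncate_surjective (p := p) 2 k x
  have hy : ∀ i < 1, y.coeff i = 0 := by simpa [WittVector.coeff_truncate] using hx
  -- `y = V z` and `V z * V z = V (z * F (V z)) = V (z * (z * p))`, whose coefficient 1 is `0`
  rw [← map_mul, WittVector.eq_iterate_verschiebung hy, Function.iterate_one,
    ← WittVector.verschiebung_mul_frobenius, WittVector.frobenius_verschiebung]
  ext i
  fin_cases i
  · simp [WittVector.coeff_truncate, WittVector.verschiebung_coeff_zero]
  · simp [WittVector.coeff_truncate, WittVector.verschiebung_coeff_succ,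
      WittVector.mul_coeff_zero, WittVector.coeff_p_zero]

theorem isUnit_or_mul_self_eq_zero [Field k] [CharP k p] (x : TruncatedWittVector p 2 k) :
    IsUnit x ∨ x * x = 0 := by
  by_cases hx : x.coeff 0 = 0
  · exact .inr (mul_self_eq_zero_of_coeff_zero hx)
  · obtain ⟨y, rfl⟩ := WittVector.truncate_surjective (p := p) 2 k x
    rw [WittVector.coeff_truncate] at hx
    exact .inl ((WittVector.isUnit_of_coeff_zero_ne_zero y hx).map _)

theorem natCast_prime_sq_eq_zero [CommRing k] [CharP k p] :
    ((p ^ 2 : ℕ) : TruncatedWittVector p 2 k) = 0 := by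
  rw [← map_natCast (WittVector.truncate 2), Nat.cast_pow]
  ext i
  rw [WittVector.coeff_truncate, coeff_zero]
  exact WittVector.coeff_p_pow_eq_zero p k i.isLt.ne

theorem ofNat_four_eq_zero [CommRing k] [CharP k 2] : (4 : TruncatedWittVector 2 2 k) = 0 := by
  simpa using natCast_prime_sq_eq_zero (p := 2) (k := k)

theorem isUnit_sub_one_of_odd_orderOf [Field k] [CharP k 2] {β : TruncatedWittVector 2 2 k}
    (hodd : Odd (orderOf β)) (hβ : β ≠ 1) : IsUnit (β - 1) := by
  refine (isUnit_or_mul_self_eq_zero (β - 1)).resolve_right fun hsq => hβ ?_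
  have hβ4 : β ^ 4 = 1 := by
    linear_combination ((β - 1) ^ 2 + 4 * (β - 1) + 6) * hsq +
      (β - 1) * ofNat_four_eq_zero (k := k)
  have hcop : (orderOf β).Coprime 4 := (Nat.coprime_two_right.mpr hodd).pow_right 2
  exact orderOf_eq_one_iff.mp (hcop.eq_one_of_dvd (orderOf_dvd_of_pow_eq_one hβ4))

end TruncatedWittVector

theorem orderOf_pow_mul_of_orderOf_eq_mul {G : Type*} [Monoid G] {γ : G} {p q k : ℕ}
    (hγ : orderOf γ = p * q) (hq : q ≠ 0) (hk : p.Coprime k) : orderOf (γ ^ (k * q)) = p := by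
  have hγq : orderOf (γ ^ q) = p := by
    rw [orderOf_pow_of_dvd hq (hγ ▸ dvd_mul_left q p), hγ, Nat.mul_div_cancel _ hq.bot_lt]
  rw [mul_comm, pow_mul, Nat.Coprime.orderOf_pow (hγq ▸ hk), hγq]

theorem geom_sum_eq_zero_of_isUnit_sub_one {R : Type*} [CommRing R] {x : R}
    (hx : IsUnit (x - 1)) {n : ℕ} (hn : x ^ n = 1) : ∑ i ∈ range n, x ^ i = 0 :=
  hx.mul_left_eq_zero.mp (by rw [geom_sum_mul, hn, sub_self])

theorem Finset.sum_range_mul_of_periodic {M : Type*} [AddCommMonoid M] {f : ℕ → M} {n : ℕ}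
    (hf : Function.Periodic f n) (c : ℕ) :
    ∑ m ∈ range (c * n), f m = c • ∑ m ∈ range n, f m := by
  induction c with
  | zero => simp
  | succ c ih =>
    rw [Nat.succ_mul, sum_range_add, ih, succ_nsmul]
    congr 1
    refine sum_congr rfl fun m _ => ?_
    rw [add_comm]
    exact_mod_cast hf.nat_mul c m

theorem Finset.sum_product_range_eq_sum_range_mul {M : Type*} [AddCommMonoid M]
    (f : ℕ → M) (a b : ℕ) :
    ∑ x ∈ range a ×ˢ range b, f (b * x.1 + x.2) = ∑ m ∈ range (a * b), f m := by
  rw [sum_product]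
  induction a with
  | zero => simp
  | succ a ih => rw [sum_range_succ, ih, Nat.succ_mul, sum_range_add, mul_comm a b]

theorem pow_val_eq_pow_val_castHom {M : Type*} [Monoid M] {β : M} {m n : ℕ} [NeZero m]
    (hβ : β ^ n = 1) (h : n ∣ m) (x : ZMod m) :
    β ^ x.val = β ^ (ZMod.castHom h (ZMod n) x).val := by
  rw [ZMod.castHom_apply, ZMod.cast_eq_val, ZMod.val_natCast, ← pow_eq_pow_mod _ hβ]

namespace ZMod

theorem sum_comp_val_eq_sum_range {M : Type*} [AddCommMonoid M] (p : ℕ) [NeZero p]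
    (f : ℕ → M) : ∑ x : ZMod p, f x.val = ∑ a ∈ range p, f a :=
  sum_nbij' val (fun a => (a : ZMod p)) (fun x _ => mem_range.mpr x.val_lt)
    (fun _ _ => mem_univ _) (fun x _ => natCast_zmod_val x)
    (fun _ ha => val_cast_of_lt (mem_range.mp ha)) (fun _ _ => rfl)

theorem sum_range_pow_add_eq_sum_erase_zero {M : Type*} [AddCommMonoid M] {p : ℕ}
    [Fact p.Prime] {t : ZMod p} (ht : orderOf t = p - 1) (j : ℕ) (f : ZMod p → M) :
    ∑ m ∈ range (p - 1), f (t ^ (m + j)) = ∑ x ∈ univ.erase 0, f x := by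
  have ht0 : t ≠ 0 := by
    rintro rfl
    have := (Fact.out : p.Prime).two_le
    simp at ht
    omega
  have hinj : Set.InjOn (fun m => t ^ (m + j)) (range (p - 1)) := by
    intro a ha b hb hab
    simp only [pow_add] at hab
    exact pow_injOn_Iio_orderOf (by simpa [ht] using ha) (by simpa [ht] using hb)
      (mul_right_cancel₀ (pow_ne_zero j ht0) hab)
  have himage : (range (p - 1)).image (fun m => t ^ (m + j)) = univ.erase 0 := by
    refine eq_of_subset_of_card_le (fun x hx => ?_) ?_
    · obtain ⟨m, -, rfl⟩ := mem_image.mp hx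
      exact mem_erase.mpr ⟨pow_ne_zero _ ht0, mem_univ _⟩
    · rw [card_erase_of_mem (mem_univ _), card_univ, ZMod.card, card_image_of_injOn hinj,
        card_range]
  rw [← himage, sum_image hinj]

theorem sum_range_pow_val_pow_add {R : Type*} [CommRing R] {p : ℕ} [Fact p.Prime] {t : ZMod p}
    (ht : orderOf t = p - 1) {β : R} (hβ : ∑ a ∈ range p, β ^ a = 0) (j : ℕ) :
    ∑ m ∈ range (p - 1), β ^ (t ^ (m + j)).val = -1 := by
  rw [sum_range_pow_add_eq_sum_erase_zero ht j (fun x => β ^ x.val), eq_neg_iff_add_eq_zero,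
    ← hβ, ← sum_comp_val_eq_sum_range]
  simp

end ZMod

theorem injOn_natCast_pow_mul_pow {p q d g h i : ℕ} (hp : 1 < p) (hq : 1 < q)
    (hgp : orderOf (g : ZMod p) = p - 1) (hgq : orderOf (g : ZMod q) = q - 1)
    (hhp : (h : ZMod p) = g) (hhq : (h : ZMod q) = 1) (hd : d ∣ p - 1) :
    Set.InjOn
      (fun sj : ℕ × ℕ => (g : ZMod (p * q)) ^ (d * sj.1 + i) * (h : ZMod (p * q)) ^ sj.2)
      ↑(range (Nat.lcm (p - 1) (q - 1) / d) ×ˢ range d) := by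
  have hfin {n : ℕ} (hn : 1 < n) (hg : orderOf (g : ZMod n) = n - 1) :
      IsOfFinOrder (g : ZMod n) :=
    orderOf_pos_iff.mp (by omega)
  rintro ⟨s, j⟩ hsj ⟨s', j'⟩ hsj' heq
  simp only [coe_product, coe_range, Set.mem_prod, Set.mem_Iio] at hsj hsj'
  have hmodq : d * s + i ≡ d * s' + i [MOD q - 1] := by
    have := congrArg (ZMod.castHom (dvd_mul_left q p) (ZMod q)) heq
    simp only [map_mul, map_pow, map_natCast, hhq, one_pow, mul_one] at this
    rwa [(hfin hq hgq).pow_eq_pow_iff_modEq, hgq] at this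
  have hmodp : d * s + j + i ≡ d * s' + j' + i [MOD p - 1] := by
    have := congrArg (ZMod.castHom (dvd_mul_right p q) (ZMod p)) heq
    simp only [map_mul, map_pow, map_natCast, hhp, ← pow_add] at this
    rw [(hfin hp hgp).pow_eq_pow_iff_modEq, hgp] at this
    convert this using 1 <;> ring
  obtain rfl : j = j' := by
    have := (hmodp.add_right_cancel' i).of_dvd hd
    simp only [Nat.ModEq, Nat.mul_add_mod] at this
    exact Nat.ModEq.eq_of_lt_of_lt this hsj.2 hsj'.2
  have hlcm : d * s ≡ d * s' [MOD Nat.lcm (p - 1) (q - 1)] :=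
    Nat.mod_lcm ((hmodp.add_right_cancel' i).add_right_cancel' j)
      (hmodq.add_right_cancel' i)
  have hdl : d ∣ Nat.lcm (p - 1) (q - 1) := hd.trans (Nat.dvd_lcm_left _ _)
  have := hlcm.eq_of_lt_of_lt ((Nat.lt_div_iff_mul_lt' hdl _).mp hsj.1)
    ((Nat.lt_div_iff_mul_lt' hdl _).mp hsj'.1)
  rw [Nat.mul_left_cancel (by omega) this]

theorem sum_pow_val_natCast_pow_mul_pow {R : Type*} [CommRing R] {p m c d g h i : ℕ}
    [Fact p.Prime] [NeZero m] (hpm : p ∣ m) (hgp : orderOf (g : ZMod p) = p - 1)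
    (hhp : (h : ZMod p) = g) (hd : d ∣ p - 1) {β : R} (hβ : β ^ p = 1)
    (hgeom : ∑ a ∈ range p, β ^ a = 0) :
    ∑ sj ∈ range (c * (p - 1) / d) ×ˢ range d,
      β ^ ((g : ZMod m) ^ (d * sj.1 + i) * (h : ZMod m) ^ sj.2).val = c • -1 := by
  have hperiodic : Function.Periodic (fun n => β ^ ((g : ZMod p) ^ (n + i)).val) (p - 1) :=
    fun n => by
      dsimp only
      rw [add_right_comm, pow_add _ (n + i), ← hgp, pow_orderOf_eq_one, mul_one]
  calc _ = ∑ sj ∈ range (c * (p - 1) / d) ×ˢ range d,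
          β ^ ((g : ZMod p) ^ (d * sj.1 + sj.2 + i)).val := sum_congr rfl fun sj _ => by
        rw [pow_val_eq_pow_val_castHom hβ hpm, map_mul, map_pow, map_pow, map_natCast,
          map_natCast, hhp, ← pow_add, add_right_comm]
    _ = ∑ n ∈ range (c * (p - 1)), β ^ ((g : ZMod p) ^ (n + i)).val := by
        rw [sum_product_range_eq_sum_range_mul (fun n => β ^ ((g : ZMod p) ^ (n + i)).val),
          Nat.div_mul_cancel (hd.trans (dvd_mul_left _ _))]
    _ = c • -1 := by
        rw [sum_range_mul_of_periodic hperiodic, ZMod.sum_range_pow_val_pow_add hgp hgeom]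

theorem stmt5_general
    (p q : ℕ) (hp : Nat.Prime p) (hq : Nat.Prime q)
    (hgcd : Nat.gcd (p - 1) (q - 1) = 4)
    (e : ℕ) (he : e = (p - 1) * (q - 1) / 4)
    (g h : ℕ)
    (hgp : orderOf (g : ZMod p) = p - 1)
    (hgq : orderOf (g : ZMod q) = q - 1)
    (hhp : (h : ZMod p) = (g : ZMod p))
    (hhq : (h : ZMod q) = 1)
    (D : ℕ → Finset (ZMod (p * q)))
    (hD : ∀ i, D i = (Finset.range (e / 4) ×ˢ Finset.range 4).image
        (fun sj => (g : ZMod (p * q)) ^ (4 * sj.1 + i) * (h : ZMod (p * q)) ^ sj.2))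
    (ℓ : ℕ) (γ : TruncatedWittVector 2 2 (GaloisField 2 ℓ))
    (hγo : orderOf γ = p * q)
 :
    ∀ i < 4, ∀ k, 1 ≤ k → k < p →
      ∑ u ∈ D i, (γ ^ (k * q)) ^ u.val
        = ((3 * (q - 1) / 4 : ℕ) : TruncatedWittVector 2 2 (GaloisField 2 ℓ)) := by
  intro i _ k hk1 hkp
  have : Fact p.Prime := ⟨hp⟩
  have : NeZero (p * q) := ⟨(Nat.mul_pos hp.pos hq.pos).ne'⟩
  have h4p : 4 ∣ p - 1 := hgcd ▸ Nat.gcd_dvd_left _ _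
  obtain ⟨c, hc⟩ : 4 ∣ q - 1 := hgcd ▸ Nat.gcd_dvd_right _ _
  have he4 : e / 4 = Nat.lcm (p - 1) (q - 1) / 4 := by rw [he, Nat.lcm, hgcd]
  have hlcm : Nat.lcm (p - 1) (q - 1) = c * (p - 1) := by
    rw [Nat.lcm, hgcd, hc, mul_left_comm, Nat.mul_div_cancel_left _ (by norm_num), mul_comm]
  have hβ : orderOf (γ ^ (k * q)) = p := orderOf_pow_mul_of_orderOf_eq_mul hγo hq.ne_zero
    (hp.coprime_iff_not_dvd.mpr (Nat.not_dvd_of_pos_of_lt hk1 hkp))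
  have hodd : Odd (orderOf (γ ^ (k * q))) := hβ ▸ hp.odd_of_ne_two (by omega)
  have hgeom : ∑ a ∈ range p, (γ ^ (k * q)) ^ a = 0 := geom_sum_eq_zero_of_isUnit_sub_one
    (TruncatedWittVector.isUnit_sub_one_of_odd_orderOf hodd
      (fun h1 => hp.one_lt.ne' (hβ ▸ orderOf_eq_one_iff.mpr h1)))
    (hβ ▸ pow_orderOf_eq_one _)
  rw [hD i, he4, sum_image (injOn_natCast_pow_mul_pow hp.one_lt hq.one_lt hgp hgq hhp hhq h4p),
    hlcm, sum_pow_val_natCast_pow_mul_pow (dvd_mul_right p q) hgp hhp h4p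
      (hβ ▸ pow_orderOf_eq_one _) hgeom, show 3 * (q - 1) / 4 = 3 * c by omega, nsmul_eq_mul]
  push_cast
  linear_combination (-(c : TruncatedWittVector 2 2 (GaloisField 2 ℓ))) *
    TruncatedWittVector.ofNat_four_eq_zero (k := GaloisField 2 ℓ)

theorem stmt5
    (p q : ℕ) (hp : Nat.Prime p) (hq : Nat.Prime q) (hne : p ≠ q)
    (hpo : Odd p) (hqo : Odd q)
    (hgcd : Nat.gcd (p - 1) (q - 1) = 4)
    (e : ℕ) (he : e = (p - 1) * (q - 1) / 4)
    (g h : ℕ)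
    (hgp : orderOf (g : ZMod p) = p - 1)
    (hgq : orderOf (g : ZMod q) = q - 1)
    (hhp : (h : ZMod p) = (g : ZMod p))
    (hhq : (h : ZMod q) = 1)
    (D : ℕ → Finset (ZMod (p * q)))
    (hD : ∀ i, D i = (Finset.range (e / 4) ×ˢ Finset.range 4).image
        (fun sj => (g : ZMod (p * q)) ^ (4 * sj.1 + i) * (h : ZMod (p * q)) ^ sj.2))
    (ℓ : ℕ) (γ : TruncatedWittVector 2 2 (GaloisField 2 ℓ))
    (hγu : IsUnit γ) (hγo : orderOf γ = p * q)
 :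
    ∀ i < 4, ∀ k, 1 ≤ k → k < p →
      ∑ u ∈ D i, (γ ^ (k * q)) ^ u.val
        = ((3 * (q - 1) / 4 : ℕ) : TruncatedWittVector 2 2 (GaloisField 2 ℓ)) :=
  stmt5_general p q hp hq hgcd e he g h hgp hgq hhp hhq D hD ℓ γ hγo
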